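/- Let A, B, C be abelian categories, F : A ⥤ C right exact, G : B ⥤ C left exact. The comma category Comma F G is noetherian (every object satisfies the ascending chain condition on subobjects) if and only if both A and B are noetherian. -/

import Mathlib

/-!
A functor `Φ` preserving monomorphisms sends a subobject `S ⊆ X` to `Φ S ⊆ Φ X`; if `Φ` reflects
isomorphisms, this map is strictly monotone, so ascending chains in `X` are controlled by ascending
chains in `Φ X`. The embeddings `X ↦ (X, 0, 0)` of `A` and `Y ↦ (0, Y, 0)` of `B` into `Comma F G`
reflect isomorphisms, which gives one direction. Conversely, since `G` preserves pullbacks, the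
projections to `A` and `B` preserve monomorphisms, and they jointly reflect isomorphisms, so
`Subobject X` embeds strictly monotonically into `Subobject X.left × Subobject X.right`.
-/

open CategoryTheory CategoryTheory.Limits ZeroObject

namespace CategoryTheory

section Subobjects

variable {D E : Type*} [Category D] [Category E]

lemma Subobject.lt_iff_not_isIso_ofLE {X : D} {S T : Subobject X} (h : S ≤ T) :
    S < T ↔ ¬ IsIso (Subobject.ofLE S T h) := by
  conv_lhs => rw [← Subobject.mk_arrow S, ← Subobject.mk_arrow T]
  exact Subobject.mk_lt_mk_iff_of_comm _ (Subobject.ofLE_arrow h)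

variable (Φ : D ⥤ E) [Φ.PreservesMonomorphisms]

noncomputable def Functor.mapSubobject (X : D) : Subobject X →o Subobject (Φ.obj X) where
  toFun S := Subobject.mk (Φ.map S.arrow)
  monotone' S T h := Subobject.mk_le_mk_of_comm (Φ.map (Subobject.ofLE S T h))
    (by rw [← Φ.map_comp, Subobject.ofLE_arrow])

lemma Functor.mapSubobject_lt_iff {X : D} {S T : Subobject X} (h : S ≤ T) :
    Φ.mapSubobject X S < Φ.mapSubobject X T ↔ ¬ IsIso (Φ.map (Subobject.ofLE S T h)) :=
  Subobject.mk_lt_mk_iff_of_comm _ (by rw [← Φ.map_comp, Subobject.ofLE_arrow])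

end Subobjects

lemma isNoetherianObject_of_jointly_reflect_isIso {D E₁ E₂ : Type*} [Category D] [Category E₁]
    [Category E₂] (Φ₁ : D ⥤ E₁) (Φ₂ : D ⥤ E₂) [Φ₁.PreservesMonomorphisms]
    [Φ₂.PreservesMonomorphisms]
    (hΦ : ∀ {Y Z : D} (f : Y ⟶ Z), IsIso (Φ₁.map f) → IsIso (Φ₂.map f) → IsIso f)
    (X : D) [IsNoetherianObject (Φ₁.obj X)] [IsNoetherianObject (Φ₂.obj X)] :
    IsNoetherianObject X := by
  have hmono : StrictMono fun S ↦ (Φ₁.mapSubobject X S, Φ₂.mapSubobject X S) := by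
    intro S T hST
    have hiso := (Subobject.lt_iff_not_isIso_ofLE hST.le).1 hST
    by_cases h₁ : IsIso (Φ₁.map (Subobject.ofLE S T hST.le))
    · exact Prod.lt_of_le_of_lt ((Φ₁.mapSubobject X).monotone hST.le)
        ((Φ₂.mapSubobject_lt_iff hST.le).2 fun h₂ ↦ hiso (hΦ _ h₁ h₂))
    · exact Prod.lt_of_lt_of_le ((Φ₁.mapSubobject_lt_iff hST.le).2 h₁)
        ((Φ₂.mapSubobject X).monotone hST.le)
  exact ⟨hmono.wellFoundedGT⟩

lemma isNoetherianObject_of_reflectsIsomorphisms {D E : Type*} [Category D] [Category E]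
    (Φ : D ⥤ E) [Φ.PreservesMonomorphisms] [Φ.ReflectsIsomorphisms] (X : D)
    [IsNoetherianObject (Φ.obj X)] : IsNoetherianObject X :=
  isNoetherianObject_of_jointly_reflect_isIso Φ Φ (fun f _ _ ↦ isIso_of_reflects_iso f Φ) X

namespace Comma

variable {A B T : Type*} [Category A] [Category B] [Category T] (L : A ⥤ T) (R : B ⥤ T)

lemma mono_of_mono_left_of_mono_right {X Y : Comma L R} (f : X ⟶ Y) [Mono f.left]
    [Mono f.right] : Mono f where
  right_cancellation _ _ h := Comma.hom_ext _ _
    ((cancel_mono f.left).1 congr(($h).left)) ((cancel_mono f.right).1 congr(($h).right))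

lemma isIso_of_isIso_left_of_isIso_right {X Y : Comma L R} (f : X ⟶ Y) [IsIso f.left]
    [IsIso f.right] : IsIso f :=
  (isoMk (asIso f.left) (asIso f.right) f.w).isIso_hom

instance preservesLimitsOfShape_fst (J : Type*) [Category J] [HasLimitsOfShape J A]
    [HasLimitsOfShape J B] [PreservesLimitsOfShape J R] :
    PreservesLimitsOfShape J (Comma.fst L R) where
  preservesLimit :=
    preservesLimit_of_preserves_limit_cone
      (coneOfPreservesIsLimit _ (limit.isLimit _) (limit.isLimit _))
      (limit.isLimit _)

instance preservesLimitsOfShape_snd (J : Type*) [Category J] [HasLimitsOfShape J A]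
    [HasLimitsOfShape J B] [PreservesLimitsOfShape J R] :
    PreservesLimitsOfShape J (Comma.snd L R) where
  preservesLimit :=
    preservesLimit_of_preserves_limit_cone
      (coneOfPreservesIsLimit _ (limit.isLimit _) (limit.isLimit _))
      (limit.isLimit _)

variable [HasZeroMorphisms T]

noncomputable def inl [HasZeroObject B] : A ⥤ Comma L R where
  obj X := ⟨X, 0, 0⟩
  map f := ⟨f, 𝟙 0, by simp⟩

noncomputable def inr [HasZeroObject A] : B ⥤ Comma L R where
  obj Y := ⟨0, Y, 0⟩
  map f := ⟨𝟙 0, f, by simp⟩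

instance [HasZeroObject B] : (inl L R).PreservesMonomorphisms where
  preserves f _ :=
    have : Mono ((inl L R).map f).left := ‹Mono f›
    have : Mono ((inl L R).map f).right := inferInstanceAs (Mono (𝟙 _))
    mono_of_mono_left_of_mono_right L R _

instance [HasZeroObject A] : (inr L R).PreservesMonomorphisms where
  preserves f _ :=
    have : Mono ((inr L R).map f).left := inferInstanceAs (Mono (𝟙 _))
    have : Mono ((inr L R).map f).right := ‹Mono f›
    mono_of_mono_left_of_mono_right L R _

instance [HasZeroObject B] : (inl L R).ReflectsIsomorphisms where
  reflects f _ := inferInstanceAs (IsIso ((fst L R).map ((inl L R).map f)))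

instance [HasZeroObject A] : (inr L R).ReflectsIsomorphisms where
  reflects f _ := inferInstanceAs (IsIso ((snd L R).map ((inr L R).map f)))

end Comma

end CategoryTheory

theorem comma_noetherian_iff_general {A B C : Type*} [Category A] [Category B] [Category C]
    [Abelian A] [Abelian B] [Abelian C]
    (F : A ⥤ C) (G : B ⥤ C) [PreservesFiniteLimits G] :
    (∀ X : Comma F G, IsNoetherianObject X) ↔
      (∀ X : A, IsNoetherianObject X) ∧ (∀ Y : B, IsNoetherianObject Y) := by
  refine ⟨fun h ↦ ⟨fun X ↦ ?_, fun Y ↦ ?_⟩, fun ⟨hA, hB⟩ X ↦ ?_⟩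
  · have := h ((Comma.inl F G).obj X)
    exact isNoetherianObject_of_reflectsIsomorphisms (Comma.inl F G) X
  · have := h ((Comma.inr F G).obj Y)
    exact isNoetherianObject_of_reflectsIsomorphisms (Comma.inr F G) Y
  · have := hA X.left
    have := hB X.right
    exact isNoetherianObject_of_jointly_reflect_isIso (Comma.fst F G) (Comma.snd F G)
      (fun f (_ : IsIso f.left) (_ : IsIso f.right) ↦
        Comma.isIso_of_isIso_left_of_isIso_right F G f) X

/-- Let `A`, `B`, `C` be abelian categories, `F : A ⥤ C` right exact and
`G : B ⥤ C` left exact. The comma category `Comma F G` is noetherian (every object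
satisfies the ascending chain condition on subobjects) if and only if both `A` and
`B` are noetherian. -/
theorem comma_noetherian_iff {A B C : Type*} [Category A] [Category B] [Category C]
    [Abelian A] [Abelian B] [Abelian C]
    (F : A ⥤ C) [PreservesFiniteColimits F] (G : B ⥤ C) [PreservesFiniteLimits G] :
    (∀ X : Comma F G, IsNoetherianObject X) ↔
      (∀ X : A, IsNoetherianObject X) ∧ (∀ Y : B, IsNoetherianObject Y) :=
  comma_noetherian_iff_general F G
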